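/- Volume of a null-faced 4-simplex from its face areas: let v₀,…,v₄ ∈ ℝ⁴ be affinely independent, eᵢ = vᵢ − v₀, E the matrix with columns e₁,…,e₄, and mᵢ ∈ ℝ⁴ the vectors with η(mᵢ, v) = det(E with i-th column replaced by v) for all v. Assume η(mᵢ,mᵢ) = 0 for i = 1,…,4 (the four hyperfaces through v₀ are null). Define the symmetric 4×4 matrix S by S_{ii} = 0 and S_{ij} = η(mᵢ,mⱼ)/(2|det E|) for i ≠ j. Then for i ≠ j with complementary indices {k,l} = {1,2,3,4}∖{i,j}, one has η(mᵢ,mⱼ)² = (det E)² (η(e_k,e_k)η(e_l,e_l) − η(e_k,e_l)²), so |S_{ij}| is the area of the triangular face with vertices v₀, v₀+e_k, v₀+e_l; and the simplex volume Ω = |det E|/4! satisfies Ω = (1/6)·|det S|^{1/2}. -/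

import Mathlib

/-!
Let `E` be the edge matrix, `η = diag(-1, 1, 1, 1)` and `G = Eᵀ η E` the Gram matrix of the
edges. Cramer's rule makes the normals the columns of `η (adj E)ᵀ`, so their Gram matrix is
`N = adj E · η · (adj E)ᵀ = -adj G`, the sign coming from `adj η = -η`; also
`det G = -(det E)²`. Jacobi's identity expresses the `2 × 2` minor `N_ii N_jj - N_ij²` of
`-adj G` through `det G` and the complementary minor of `G`, which is the squared area of the
face spanned by `e_k, e_l`; nullity of the normals kills `N_ii N_jj`. Finally
`S = N / (2 |det E|)` and `det N = (det G)³ = -(det E)⁶` give `|det S| = (det E)² / 16`.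
-/

/-- The Minkowski bilinear form on `ℝ⁴` with signature `(-,+,+,+)`. -/
def eta (x y : Fin 4 → ℝ) : ℝ :=
  -(x 0 * y 0) + x 1 * y 1 + x 2 * y 2 + x 3 * y 3

/-- The 4×4 matrix whose columns are the vectors `e 0, e 1, e 2, e 3`. -/
def cols (e : Fin 4 → Fin 4 → ℝ) : Matrix (Fin 4) (Fin 4) ℝ :=
  Matrix.of fun i j => e j i

open Matrix

theorem adjugate_mul_adjugate_sub_fin_four {R : Type*} [CommRing R] (M : Matrix (Fin 4) (Fin 4) R) :
    M.adjugate 0 0 * M.adjugate 1 1 - M.adjugate 0 1 * M.adjugate 1 0 =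
      M.det * (M 2 2 * M 3 3 - M 2 3 * M 3 2) := by
  simp only [adjugate_fin_succ_eq_det_submatrix, det_succ_row_zero (n := 3), det_fin_three,
    Fin.sum_univ_four, submatrix_apply]
  simp [Fin.succAbove]
  ring

theorem adjugate_mul_adjugate_sub_of_insert_eq_univ {R : Type*} [CommRing R]
    (M : Matrix (Fin 4) (Fin 4) R)
    {i j k l : Fin 4} (h : ({i, j, k, l} : Finset (Fin 4)) = Finset.univ) :
    M.adjugate i i * M.adjugate j j - M.adjugate i j * M.adjugate j i =
      M.det * (M k k * M l l - M k l * M l k) := by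
  have hsurj : Function.Surjective ![i, j, k, l] := fun y => by
    have hy : y ∈ ({i, j, k, l} : Finset (Fin 4)) := h ▸ Finset.mem_univ y
    simp only [Finset.mem_insert, Finset.mem_singleton] at hy
    rcases hy with rfl | rfl | rfl | rfl
    exacts [⟨0, rfl⟩, ⟨1, rfl⟩, ⟨2, rfl⟩, ⟨3, rfl⟩]
  let σ := Equiv.ofBijective _ (Finite.surjective_iff_bijective.mp hsurj)
  have h0123 := adjugate_mul_adjugate_sub_fin_four (M.submatrix σ σ)
  rw [adjugate_submatrix_equiv_self, det_submatrix_equiv_self] at h0123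
  simpa [σ] using h0123

theorem ne_of_insert_eq_univ {i j k l : Fin 4}
    (h : ({i, j, k, l} : Finset (Fin 4)) = Finset.univ) : i ≠ j := by
  rintro rfl
  have : (Finset.univ : Finset (Fin 4)).card ≤ 3 := by
    rw [← h, Finset.insert_idem]; exact Finset.card_le_three
  simp at this

def minkowskiMatrix : Matrix (Fin 4) (Fin 4) ℝ := diagonal ![-1, 1, 1, 1]

local notation "η" => minkowskiMatrix

theorem eta_eq_dotProduct_mulVec (x y : Fin 4 → ℝ) : eta x y = x ⬝ᵥ η *ᵥ y := by
  simp [eta, minkowskiMatrix, mulVec_diagonal, dotProduct, Fin.sum_univ_four]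

theorem eta_comm (x y : Fin 4 → ℝ) : eta x y = eta y x := by
  simp only [eta]; ring

theorem minkowskiMatrix_mul_self : η * η = 1 := by
  rw [minkowskiMatrix, diagonal_mul_diagonal, ← diagonal_one]
  congr 1; ext i; fin_cases i <;> simp

theorem transpose_minkowskiMatrix : ηᵀ = η := diagonal_transpose _

theorem det_minkowskiMatrix : det η = -1 := by
  simp [minkowskiMatrix, Fin.prod_univ_four]

theorem adjugate_minkowskiMatrix : adjugate η = -η := by
  calc adjugate η = adjugate η * η * η := by rw [Matrix.mul_assoc, minkowskiMatrix_mul_self, mul_one]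
    _ = -η := by rw [adjugate_mul, det_minkowskiMatrix]; simp

def etaGram (x : Fin 4 → Fin 4 → ℝ) : Matrix (Fin 4) (Fin 4) ℝ :=
  of fun i j => eta (x i) (x j)

@[simp]
theorem etaGram_apply (x : Fin 4 → Fin 4 → ℝ) (i j : Fin 4) : etaGram x i j = eta (x i) (x j) :=
  rfl

theorem etaGram_eq (x : Fin 4 → Fin 4 → ℝ) : etaGram x = (cols x)ᵀ * η * cols x := by
  ext i j
  rw [mul_mul_apply, etaGram_apply, eta_eq_dotProduct_mulVec]
  rfl

theorem cols_eq_minkowskiMatrix_mul_adjugate_transpose {A : Matrix (Fin 4) (Fin 4) ℝ}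
    {m : Fin 4 → Fin 4 → ℝ} (hm : ∀ i w, eta (m i) w = (A.updateCol i w).det) :
    cols m = η * A.adjugateᵀ := by
  have hmη : (cols m)ᵀ * η = A.adjugate := by
    refine ext_iff_mulVec.mpr fun w => funext fun i => ?_
    rw [← mulVec_mulVec, ← cramer_eq_adjugate_mulVec, cramer_apply, ← hm, eta_eq_dotProduct_mulVec]
    rfl
  rw [← hmη, transpose_mul, transpose_transpose, transpose_minkowskiMatrix, ← Matrix.mul_assoc,
    minkowskiMatrix_mul_self, one_mul]

theorem etaGram_eq_neg_adjugate {e m : Fin 4 → Fin 4 → ℝ}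
    (hm : ∀ i w, eta (m i) w = ((cols e).updateCol i w).det) :
    etaGram m = -(etaGram e).adjugate := by
  rw [etaGram_eq, etaGram_eq, cols_eq_minkowskiMatrix_mul_adjugate_transpose hm,
    adjugate_mul_distrib, adjugate_mul_distrib, adjugate_minkowskiMatrix, ← adjugate_transpose,
    transpose_mul, transpose_transpose, transpose_minkowskiMatrix]
  calc (cols e).adjugate * η * η * (η * (cols e).adjugateᵀ)
      = (cols e).adjugate * (η * η) * η * (cols e).adjugateᵀ := by noncomm_ring
    _ = _ := by rw [minkowskiMatrix_mul_self]; noncomm_ring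

theorem det_etaGram (e : Fin 4 → Fin 4 → ℝ) : (etaGram e).det = -(cols e).det ^ 2 := by
  rw [etaGram_eq, det_mul, det_mul, det_transpose, det_minkowskiMatrix]
  ring

theorem det_cols_ne_zero_of_affineIndependent {v : Fin 5 → Fin 4 → ℝ} (hv : AffineIndependent ℝ v)
    {e : Fin 4 → Fin 4 → ℝ} (he : ∀ i, e i = v i.succ - v 0) : (cols e).det ≠ 0 := by
  have hli : LinearIndependent ℝ e := by
    have := ((affineIndependent_iff_linearIndependent_vsub ℝ v 0).mp hv).comp
      (fun i : Fin 4 => (⟨i.succ, Fin.succ_ne_zero i⟩ : {x : Fin 5 // x ≠ 0}))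
      (fun a b hab => Fin.succ_injective _ (congrArg Subtype.val hab))
    rw [funext he]; exact this
  exact ((isUnit_iff_isUnit_det _).mp (linearIndependent_cols_iff_isUnit.mp hli)).ne_zero

theorem det_etaGram_eq_neg_det_pow_six {e m : Fin 4 → Fin 4 → ℝ}
    (hm : ∀ i w, eta (m i) w = ((cols e).updateCol i w).det) :
    (etaGram m).det = -(cols e).det ^ 6 := by
  rw [etaGram_eq_neg_adjugate hm, det_neg, det_adjugate, det_etaGram, Fintype.card_fin]
  ring

theorem eta_sq_eq_det_sq_mul_of_null {e m : Fin 4 → Fin 4 → ℝ}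
    (hm : ∀ i w, eta (m i) w = ((cols e).updateCol i w).det) (hnull : ∀ i, eta (m i) (m i) = 0)
    {i j k l : Fin 4} (h : ({i, j, k, l} : Finset (Fin 4)) = Finset.univ) :
    eta (m i) (m j) ^ 2 =
      (cols e).det ^ 2 * (eta (e k) (e k) * eta (e l) (e l) - eta (e k) (e l) ^ 2) := by
  have hadj : (etaGram e).adjugate = -etaGram m := by rw [etaGram_eq_neg_adjugate hm, neg_neg]
  have hjacobi := adjugate_mul_adjugate_sub_of_insert_eq_univ (etaGram e) h
  rw [hadj, det_etaGram] at hjacobi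
  simp only [Matrix.neg_apply, etaGram_apply, hnull, eta_comm (m j) (m i), eta_comm (e l) (e k)]
    at hjacobi
  linear_combination -hjacobi

theorem abs_div_two_mul_abs_eq_half_sqrt {n d x : ℝ} (hd : d ≠ 0) (h : n ^ 2 = d ^ 2 * x) :
    |n / (2 * |d|)| = 1 / 2 * √x := by
  have hx : x = (n / d) ^ 2 := by field_simp; linarith
  rw [hx, Real.sqrt_sq_eq_abs, abs_div, abs_div, abs_mul, abs_two, abs_abs]
  ring

/-- Volume of a null-faced 4-simplex from its face areas: if the four volume
normals `mᵢ` (defined from the edge matrix `E` by column replacement) are null,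
and `S` is the symmetric matrix with `Sᵢᵢ = 0`, `Sᵢⱼ = η(mᵢ,mⱼ)/(2|det E|)`,
then for complementary index pairs `{i,j}`, `{k,l}`, the product `η(mᵢ,mⱼ)²`
equals `(det E)²` times the squared parallelogram area of `e_k, e_l` (so
`|Sᵢⱼ|` is the area of the triangular face with vertices `v₀, v₀+e_k, v₀+e_l`),
and the simplex volume `Ω = |det E|/4!` satisfies `Ω = (1/6)·|det S|^{1/2}`. -/
theorem nullFaced_simplex_volume_from_areas (v : Fin 5 → Fin 4 → ℝ)
    (hv : AffineIndependent ℝ v)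
    (e : Fin 4 → Fin 4 → ℝ) (he : ∀ i, e i = v i.succ - v 0)
    (m : Fin 4 → Fin 4 → ℝ)
    (hm : ∀ i w, eta (m i) w = ((cols e).updateCol i w).det)
    (hnull : ∀ i, eta (m i) (m i) = 0)
    (S : Matrix (Fin 4) (Fin 4) ℝ)
    (hS : ∀ i j, S i j =
      if i = j then 0 else eta (m i) (m j) / (2 * |(cols e).det|)) :
    (∀ i j k l : Fin 4, ({i, j, k, l} : Finset (Fin 4)) = Finset.univ →
      eta (m i) (m j) ^ 2 =
        (cols e).det ^ 2 * (eta (e k) (e k) * eta (e l) (e l) - eta (e k) (e l) ^ 2) ∧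
      |S i j| =
        (1 / 2) * Real.sqrt (eta (e k) (e k) * eta (e l) (e l) - eta (e k) (e l) ^ 2)) ∧
    |(cols e).det| / 24 = (1 / 6) * Real.sqrt |S.det| := by
  have hd : (cols e).det ≠ 0 := det_cols_ne_zero_of_affineIndependent hv he
  refine ⟨fun i j k l h => ?_, ?_⟩
  · have harea := eta_sq_eq_det_sq_mul_of_null hm hnull h
    rw [hS, if_neg (ne_of_insert_eq_univ h)]
    exact ⟨harea, abs_div_two_mul_abs_eq_half_sqrt hd harea⟩
  · have hS' : S = (2 * |(cols e).det|)⁻¹ • etaGram m := by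
      ext a b
      rw [hS, Matrix.smul_apply, etaGram_apply, smul_eq_mul]
      split_ifs with hab
      · rw [hab, hnull, mul_zero]
      · rw [div_eq_inv_mul]
    have hdetS : |S.det| = (|(cols e).det| / 4) ^ 2 := by
      rw [hS', det_smul, det_etaGram_eq_neg_det_pow_six hm, Fintype.card_fin, abs_mul,
        abs_neg, abs_pow, abs_pow, abs_inv, abs_mul, abs_two, abs_abs]
      field_simp
      ring
    rw [hdetS, Real.sqrt_sq (by positivity)]
    ring
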